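/- Let Γ ⊆ ℕ² be defined by Γ = {(0,0)} ∪ {(k,m) : m ≥ 1, 0 ≤ k ≤ mc − g} for integers c ≥ 2g+1, g ≥ 1. Then Γ is a sub-semigroup of ℕ² that is not finitely generated, and the unit slice of the closed convex cone it generates is the interval [0,c]. -/

import Mathlib

/-- The smallest closed convex cone containing a set `S`. -/
def closedConvexConeGen {E : Type*} [AddCommMonoid E] [Module ℝ E] [TopologicalSpace E]
    (S : Set E) : Set E :=
  ⋂₀ {C : Set E | S ⊆ C ∧ IsClosed C ∧ Convex ℝ C ∧ ∀ r : ℝ, 0 ≤ r → ∀ x ∈ C, r • x ∈ C}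

/-!
A nonzero point `(k, m)` of `Γ` satisfies `k + g ≤ m c`, so a sum of two nonzero points satisfies
`k + 2g ≤ m c`. Hence every point on the line `k + g = m c` is irreducible in `Γ`; there are
infinitely many of them, while a finitely generated monoid without nontrivial units has only
finitely many irreducibles.

`Γ` lies in the closed convex cone `0 ≤ k ≤ c m`, which bounds the slice by `[0, c]`. Conversely
the slice is convex, contains `0` because `(0, 1) ∈ Γ`, and contains `c` because
`(n c, n + 1) ∈ Γ` and `(n c, n + 1) / (n + 1) → (c, 1)`.
-/

open Set Filter Topology

theorem Convex.setOf_prodMk_mem {𝕜 E F : Type*} [Semiring 𝕜] [PartialOrder 𝕜]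
    [AddCommMonoid E] [AddCommMonoid F] [Module 𝕜 E] [Module 𝕜 F] {K : Set (E × F)}
    (hK : Convex 𝕜 K) (y : F) : Convex 𝕜 {x | (x, y) ∈ K} := by
  intro x hx x' hx' a b ha hb hab
  have := hK hx hx' ha hb hab
  rwa [Prod.smul_mk, Prod.smul_mk, Prod.mk_add_mk, ← add_smul, hab, one_smul] at this

section ClosedConvexConeGen

variable {E : Type*} [AddCommMonoid E] [Module ℝ E] [TopologicalSpace E] {S : Set E}

theorem subset_closedConvexConeGen : S ⊆ closedConvexConeGen S :=
  fun _ hx _ hC => hC.1 hx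

theorem isClosed_closedConvexConeGen : IsClosed (closedConvexConeGen S) :=
  isClosed_sInter fun _ hC => hC.2.1

theorem convex_closedConvexConeGen : Convex ℝ (closedConvexConeGen S) :=
  convex_sInter fun _ hC => hC.2.2.1

theorem smul_mem_closedConvexConeGen {r : ℝ} (hr : 0 ≤ r) {x : E}
    (hx : x ∈ closedConvexConeGen S) : r • x ∈ closedConvexConeGen S :=
  fun _ hC => hC.2.2.2 r hr x (hx _ hC)

theorem closedConvexConeGen_subset_setOf_nonneg (f : E →L[ℝ] ℝ) (hS : ∀ x ∈ S, 0 ≤ f x) :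
    closedConvexConeGen S ⊆ {x | 0 ≤ f x} :=
  sInter_subset_of_mem ⟨hS, isClosed_le continuous_const f.continuous,
    convex_halfSpace_ge f.toLinearMap.isLinear 0,
    fun r hr x hx => by simpa only [mem_ofPred_eq, map_smul, smul_eq_mul] using mul_nonneg hr hx⟩

end ClosedConvexConeGen

instance AddSubmonoid.instSubsingletonAddUnits {M : Type*} [AddMonoid M]
    [Subsingleton (AddUnits M)] {S : AddSubmonoid M} : Subsingleton (AddUnits S) :=
  .addUnits_of_isAddUnit fun _ ha => Subtype.ext (ha.map S.subtype).eq_zero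

def curveSemigroup (g c : ℕ) : AddSubmonoid (ℕ × ℕ) where
  carrier := {(0, 0)} ∪ {p : ℕ × ℕ | 1 ≤ p.2 ∧ p.1 + g ≤ p.2 * c}
  zero_mem' := Or.inl rfl
  add_mem' := by
    rintro p q (rfl | ⟨hp2, hp⟩) (rfl | ⟨hq2, hq⟩)
    · exact Or.inl rfl
    · exact Or.inr ⟨by simpa using hq2, by simpa using hq⟩
    · exact Or.inr ⟨by simpa using hp2, by simpa using hp⟩
    · refine Or.inr ⟨by simp only [Prod.snd_add]; omega, ?_⟩
      simp only [Prod.fst_add, Prod.snd_add, add_mul]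
      omega

def curveCone (g c : ℕ) : Set (ℝ × ℝ) :=
  closedConvexConeGen ((fun p : ℕ × ℕ => (((p.1 : ℝ), (p.2 : ℝ)) : ℝ × ℝ)) '' curveSemigroup g c)

variable {g c : ℕ}

theorem mem_curveSemigroup {p : ℕ × ℕ} :
    p ∈ curveSemigroup g c ↔ p = 0 ∨ 1 ≤ p.2 ∧ p.1 + g ≤ p.2 * c :=
  Iff.rfl

theorem addIrreducible_mk_curveSemigroup (hg : 1 ≤ g) {p : ℕ × ℕ} (hp2 : 1 ≤ p.2)
    (hp : p.1 + g = p.2 * c) :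
    AddIrreducible (⟨p, mem_curveSemigroup.2 (.inr ⟨hp2, hp.le⟩)⟩ : curveSemigroup g c) := by
  refine ⟨?_, ?_⟩
  · rw [isAddUnit_iff_eq_zero, AddSubmonoid.mk_eq_zero]
    rintro rfl
    simp at hp2
  · rintro ⟨a, ha⟩ ⟨b, hb⟩ hab
    simp only [isAddUnit_iff_eq_zero, AddSubmonoid.mk_eq_zero]
    have hsum : p = a + b := congrArg Subtype.val hab
    rcases mem_curveSemigroup.1 ha with rfl | ⟨-, ha⟩
    · exact Or.inl rfl
    rcases mem_curveSemigroup.1 hb with rfl | ⟨-, hb⟩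
    · exact Or.inr rfl
    have hmul : a.2 * c + b.2 * c = p.2 * c := by rw [← add_mul, hsum, Prod.snd_add]
    have hfst : a.1 + b.1 = p.1 := by rw [hsum, Prod.fst_add]
    omega

theorem infinite_setOf_fst_add_eq_snd_mul (hc : 1 ≤ c) :
    {p : ℕ × ℕ | 1 ≤ p.2 ∧ p.1 + g = p.2 * c}.Infinite := by
  refine Infinite.of_image Prod.snd ((Ioi_infinite g).mono fun m (hm : g < m) => ?_)
  have hm_le : m ≤ m * c := Nat.le_mul_of_pos_right m hc
  exact ⟨(m * c - g, m), ⟨(by omega : 1 ≤ m), (by omega : m * c - g + g = m * c)⟩, rfl⟩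

theorem infinite_setOf_addIrreducible_curveSemigroup (hg : 1 ≤ g) (hc : 1 ≤ c) :
    {p : curveSemigroup g c | AddIrreducible p}.Infinite := by
  refine Infinite.of_image Subtype.val ((infinite_setOf_fst_add_eq_snd_mul (g := g) hc).mono ?_)
  rintro p ⟨hp2, hp⟩
  exact ⟨_, addIrreducible_mk_curveSemigroup hg hp2 hp, rfl⟩

theorem curveSemigroup_not_fg (hg : 1 ≤ g) (hc : 1 ≤ c) : ¬ (curveSemigroup g c).FG := by
  intro hfg
  have : AddMonoid.FG (curveSemigroup g c) := (AddMonoid.fg_iff_addSubmonoid_fg _).2 hfg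
  exact infinite_setOf_addIrreducible_curveSemigroup hg hc finite_addIrreducible

theorem curveCone_subset : curveCone g c ⊆ {p | 0 ≤ p.1 ∧ p.1 ≤ c * p.2} := by
  intro p hp
  have h_fst := closedConvexConeGen_subset_setOf_nonneg (ContinuousLinearMap.fst ℝ ℝ ℝ)
    (by rintro _ ⟨q, -, rfl⟩; simp) hp
  have h_slope := closedConvexConeGen_subset_setOf_nonneg
    ((c : ℝ) • ContinuousLinearMap.snd ℝ ℝ ℝ - ContinuousLinearMap.fst ℝ ℝ ℝ) ?_ hp
  · simp only [mem_ofPred_eq, FunLike.coe_sub, FunLike.coe_smul,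
      Pi.sub_apply, Pi.smul_apply, ContinuousLinearMap.coe_snd', ContinuousLinearMap.coe_fst',
      smul_eq_mul, sub_nonneg] at h_fst h_slope
    exact ⟨h_fst, h_slope⟩
  rintro _ ⟨q, hq, rfl⟩
  have hq : q.1 ≤ c * q.2 := by
    rcases mem_curveSemigroup.1 hq with rfl | ⟨-, hq⟩
    · simp
    · rw [mul_comm]; omega
  simpa using (by exact_mod_cast hq : (q.1 : ℝ) ≤ c * q.2)

theorem natCast_mul_mem_curveCone (hgc : g ≤ c) (n : ℕ) :
    ((n * c : ℝ), (n + 1 : ℝ)) ∈ curveCone g c := by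
  refine subset_closedConvexConeGen ⟨(n * c, n + 1), Or.inr ⟨by omega, ?_⟩, by push_cast; rfl⟩
  rw [add_one_mul]
  omega

theorem mk_natCast_one_mem_curveCone (hgc : g ≤ c) : ((c : ℝ), (1 : ℝ)) ∈ curveCone g c := by
  have hmem (n : ℕ) : ((n : ℝ) + 1)⁻¹ • ((n * c : ℝ), (n + 1 : ℝ)) ∈ curveCone g c :=
    smul_mem_closedConvexConeGen (by positivity) (natCast_mul_mem_curveCone hgc n)
  have heq (n : ℕ) :
      ((n : ℝ) + 1)⁻¹ • ((n * c : ℝ), (n + 1 : ℝ)) = ((n : ℝ) / (n + 1) * c, (1 : ℝ)) := by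
    rw [Prod.smul_mk, smul_eq_mul, smul_eq_mul, inv_mul_cancel₀ (by positivity)]
    congr 1
    ring
  have hlim : Tendsto (fun n : ℕ => ((n : ℝ) + 1)⁻¹ • ((n * c : ℝ), (n + 1 : ℝ))) atTop
      (𝓝 ((c : ℝ), (1 : ℝ))) := by
    simp_rw [heq]
    simpa using ((tendsto_natCast_div_add_atTop (1 : ℝ)).mul_const (c : ℝ)).prodMk_nhds
      (tendsto_const_nhds (x := (1 : ℝ)))
  exact isClosed_closedConvexConeGen.mem_of_tendsto hlim (.of_forall hmem)

theorem setOf_mk_one_mem_curveCone (hgc : g ≤ c) :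
    {x : ℝ | (x, 1) ∈ curveCone g c} = Icc (0 : ℝ) c := by
  refine subset_antisymm (fun x hx => by simpa using curveCone_subset hx) ?_
  rw [← segment_eq_Icc (Nat.cast_nonneg c)]
  exact (convex_closedConvexConeGen.setOf_prodMk_mem 1).segment_subset
    (by simpa using natCast_mul_mem_curveCone hgc 0) (mk_natCast_one_mem_curveCone hgc)

/-- For integers `g ≥ 1`, `c ≥ 2g+1`, the set
`Γ = {(0,0)} ∪ {(k,m) : m ≥ 1, 0 ≤ k ≤ mc − g}` (the condition written additively as
`k + g ≤ mc`) is a sub-semigroup of `ℕ²` which is not finitely generated, and the unit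
slice of the closed convex cone it generates is the interval `[0,c]`. -/
theorem curve_semigroup_not_finitely_generated
    (g c : ℕ) (hg : 1 ≤ g) (hc : 2 * g + 1 ≤ c) :
    (∀ x ∈ ({(0, 0)} ∪ {p : ℕ × ℕ | 1 ≤ p.2 ∧ p.1 + g ≤ p.2 * c} : Set (ℕ × ℕ)),
     ∀ y ∈ ({(0, 0)} ∪ {p : ℕ × ℕ | 1 ≤ p.2 ∧ p.1 + g ≤ p.2 * c} : Set (ℕ × ℕ)),
      x + y ∈ ({(0, 0)} ∪ {p : ℕ × ℕ | 1 ≤ p.2 ∧ p.1 + g ≤ p.2 * c} : Set (ℕ × ℕ))) ∧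
    (¬ ∃ S : Finset (ℕ × ℕ),
      ({(0, 0)} ∪ {p : ℕ × ℕ | 1 ≤ p.2 ∧ p.1 + g ≤ p.2 * c} : Set (ℕ × ℕ))
        = (AddSubmonoid.closure (S : Set (ℕ × ℕ)) : Set (ℕ × ℕ))) ∧
    {x : ℝ | ((x, 1) : ℝ × ℝ) ∈ closedConvexConeGen
        ((fun p : ℕ × ℕ => (((p.1 : ℝ), (p.2 : ℝ)) : ℝ × ℝ)) ''
          ({(0, 0)} ∪ {p : ℕ × ℕ | 1 ≤ p.2 ∧ p.1 + g ≤ p.2 * c} : Set (ℕ × ℕ)))}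
      = Set.Icc (0 : ℝ) (c : ℝ) := by
  refine ⟨fun x hx y hy => (curveSemigroup g c).add_mem hx hy, ?_,
    setOf_mk_one_mem_curveCone (by omega)⟩
  rintro ⟨S, hS⟩
  exact curveSemigroup_not_fg hg (by omega) ⟨S, SetLike.coe_injective hS.symm⟩
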